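/- arXiv:2512.23083 — 2 statements merged into one kernel-verified Lean document; each statement's English description precedes it below -/
import Mathlib

section
/- Let f be an analytic function in the unit disc Δ such that 0 < ϱ_{(α,β,γ),M}[f] = ϱ_0 < +∞. Then for any 0 < μ < ϱ_0 there exists a set I ⊂ [0,1) of infinite logarithmic measure (∫_I dr/(1−r) = +∞) such that for all r ∈ I one has α(log log M(r,f)) > μ·β(log γ(1/(1−r))). -/
open Filter Topology MeasureTheory Asymptotics

/-- The maximum modulus `M(r,f) = max_{|z|=r} |f(z)|`. -/
noncomputable def maxMod (f : ℂ → ℂ) (r : ℝ) : ℝ :=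
  sSup ((fun z => ‖f z‖) '' Metric.sphere (0 : ℂ) r)

/-- `log⁺ x = max(0, log x)`. -/
noncomputable def logPlus (x : ℝ) : ℝ := max 0 (Real.log x)

/-- The Nevanlinna proximity function
`m(r,f) = (1/2π) ∫_0^{2π} log⁺ |f(r e^{iθ})| dθ`. -/
noncomputable def proxFun (f : ℂ → ℂ) (r : ℝ) : ℝ :=
  (2 * Real.pi)⁻¹ *
    ∫ θ in (0:ℝ)..(2 * Real.pi), logPlus ‖f ((r : ℂ) * Complex.exp (θ * Complex.I))‖

/-- The order of the pole of `f` at `z` (zero if `f` has no pole there). -/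
noncomputable def poleOrder (f : ℂ → ℂ) (z : ℂ) : ℕ :=
  @dite _ (MeromorphicAt f z) (Classical.dec _)
    (fun _ => (-((meromorphicOrderAt f z).untopD 0)).toNat) (fun _ => 0)

/-- `n(t,f)`: the number of poles of `f` in `|z| ≤ t`, counted with multiplicity. -/
noncomputable def poleCount (f : ℂ → ℂ) (t : ℝ) : ℝ :=
  ∑' z : (Metric.closedBall (0:ℂ) t), (poleOrder f z : ℝ)

/-- The integrated counting function
`N(r,f) = ∫_0^r (n(t,f) - n(0,f))/t dt + n(0,f) log r`. -/
noncomputable def countFun (f : ℂ → ℂ) (r : ℝ) : ℝ :=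
  (∫ t in (0:ℝ)..r, (poleCount f t - poleCount f 0) / t) + poleCount f 0 * Real.log r

/-- The Nevanlinna characteristic `T(r,f) = m(r,f) + N(r,f)`. -/
noncomputable def charT (f : ℂ → ℂ) (r : ℝ) : ℝ := proxFun f r + countFun f r

/-- The class `L` of growth functions. -/
def ClassL (a : ℝ → ℝ) : Prop :=
  Continuous a ∧ (∀ x, 0 ≤ a x) ∧ Monotone a ∧
    (∃ x₀, ∀ x ≤ x₀, a x = a x₀) ∧ Filter.Tendsto a Filter.atTop Filter.atTop

/-- `α ∈ L₁` : `α ∈ L` and `α(a+b) ≤ α(a)+α(b)+c` for all `a,b ≥ R₀`. -/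
def ClassL1 (a : ℝ → ℝ) : Prop :=
  ClassL a ∧ ∃ c > (0:ℝ), ∃ R₀ : ℝ, ∀ x ≥ R₀, ∀ y ≥ R₀, a (x + y) ≤ a x + a y + c

/-- `β ∈ L₂` : `β ∈ L` and `β(x+O(1)) = (1+o(1)) β(x)` as `x → +∞`. -/
def ClassL2 (b : ℝ → ℝ) : Prop :=
  ClassL b ∧ ∀ C : ℝ, Filter.Tendsto (fun x => b (x + C) / b x) Filter.atTop (nhds 1)

/-- `γ ∈ L₃` : `γ ∈ L` and `γ` is subadditive. -/
def ClassL3 (g : ℝ → ℝ) : Prop :=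
  ClassL g ∧ ∃ R₀ : ℝ, ∀ x ≥ R₀, ∀ y ≥ R₀, g (x + y) ≤ g x + g y

/-- The standing hypotheses on the growth scale functions `α, β, γ`:
`α ∈ L₁`, `β ∈ L₂`, `γ ∈ L₃`, `α(log^[p] x) = o(β(log γ(x)))` for `p ≥ 2`,
`α(log x) = o(α(x))`, and `α⁻¹(kx) = o(α⁻¹(x))` for each fixed `0 ≤ k < 1`. -/
def GrowthScale (a b g : ℝ → ℝ) : Prop :=
  ClassL1 a ∧ ClassL2 b ∧ ClassL3 g ∧
    (∀ p : ℕ, 2 ≤ p →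
      (fun x => a (Real.log^[p] x)) =o[Filter.atTop] fun x => b (Real.log (g x))) ∧
    ((fun x => a (Real.log x)) =o[Filter.atTop] a) ∧
    (∀ k : ℝ, 0 ≤ k → k < 1 →
      (fun x => Function.invFun a (k * x)) =o[Filter.atTop] fun x => Function.invFun a x)

/-- The comparison denominator `β(log γ(1/(1-r)))`. -/
noncomputable def betaDen (b g : ℝ → ℝ) (r : ℝ) : ℝ := b (Real.log (g (1 / (1 - r))))

/-- The `(α,β,γ)`-order of an analytic function in the unit disc,
defined via the maximum modulus. -/
noncomputable def orderM (a b g : ℝ → ℝ) (f : ℂ → ℂ) : EReal :=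
  Filter.limsup
    (fun r : ℝ => ((a (Real.log (Real.log (maxMod f r))) / betaDen b g r : ℝ) : EReal))
    (𝓝[<] (1:ℝ))

/-- The `(α(log),β,γ)`-order of an analytic function in the unit disc,
defined via the maximum modulus. -/
noncomputable def orderLogM (a b g : ℝ → ℝ) (f : ℂ → ℂ) : EReal :=
  Filter.limsup
    (fun r : ℝ =>
      ((a (Real.log (Real.log (Real.log (maxMod f r)))) / betaDen b g r : ℝ) : EReal))
    (𝓝[<] (1:ℝ))

/-- The `(α,β,γ)`-order of a meromorphic function in the unit disc,
defined via the Nevanlinna characteristic. -/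
noncomputable def orderT (a b g : ℝ → ℝ) (f : ℂ → ℂ) : EReal :=
  Filter.limsup
    (fun r : ℝ => ((a (Real.log (charT f r)) / betaDen b g r : ℝ) : EReal))
    (𝓝[<] (1:ℝ))

/-- The `(α(log),β,γ)`-order of a meromorphic function in the unit disc,
defined via the Nevanlinna characteristic. -/
noncomputable def orderLogT (a b g : ℝ → ℝ) (f : ℂ → ℂ) : EReal :=
  Filter.limsup
    (fun r : ℝ => ((a (Real.log (Real.log (charT f r))) / betaDen b g r : ℝ) : EReal))
    (𝓝[<] (1:ℝ))

/-- The `(α,β,γ)`-type (with order value `rho`) of an analytic function in the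
unit disc, defined via the maximum modulus. -/
noncomputable def typeM (a b g : ℝ → ℝ) (rho : ℝ) (f : ℂ → ℂ) : EReal :=
  Filter.limsup
    (fun r : ℝ =>
      ((Real.exp (a (Real.log (Real.log (maxMod f r)))) /
        (Real.exp (betaDen b g r)) ^ rho : ℝ) : EReal))
    (𝓝[<] (1:ℝ))

/-- A set `F ⊂ [0,1)` has finite logarithmic measure if `∫_F dr/(1-r) < ∞`. -/
def FiniteLogMeasure (F : Set ℝ) : Prop :=
  ∫⁻ r in F, ENNReal.ofReal (1 / (1 - r)) < ⊤

/-- A set `F ⊂ [0,1)` has infinite logarithmic measure if `∫_F dr/(1-r) = ∞`. -/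
def InfiniteLogMeasure (F : Set ℝ) : Prop :=
  ∫⁻ r in F, ENNReal.ofReal (1 / (1 - r)) = ⊤

/-- `f` is a solution, analytic on the unit disc, of the linear differential
equation `f^{(k)} + A_{k-1} f^{(k-1)} + ⋯ + A_1 f' + A_0 f = 0`. -/
def IsSolution (k : ℕ) (A : ℕ → ℂ → ℂ) (f : ℂ → ℂ) : Prop :=
  AnalyticOnNhd ℂ f (Metric.ball (0:ℂ) 1) ∧
    ∀ z ∈ Metric.ball (0:ℂ) 1,
      iteratedDeriv k f z + ∑ j ∈ Finset.range k, A j z * iteratedDeriv j f z = 0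

/-!
Since the order exceeds some `μ' ∈ (μ, ρ₀)`, there are radii `r` arbitrarily close to `1` with
`α(log log M(r)) > μ' β(log γ(1/(1-r)))`. On `[r, (1 + r)/2)` the left side can only grow, as `M`
is nondecreasing by the maximum modulus principle, while `1/(1-r)` at most doubles; by
subadditivity of `γ` and `β ∈ L₂` the right side then grows by a factor smaller than `μ'/μ`.
Each such interval has logarithmic measure `log 2`, and infinitely many of them are disjoint.
-/

open Set

theorem Real.log_log_le_abs_log {m x : ℝ} (hm : 0 < m) (hmx : m ≤ x) (hx : x ≤ 1) :
    Real.log (Real.log x) ≤ |Real.log m| := by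
  have hlogx : Real.log x ≤ 0 := Real.log_nonpos (hm.le.trans hmx) hx
  have hlogm : Real.log m ≤ 0 := Real.log_nonpos hm.le (hmx.trans hx)
  calc Real.log (Real.log x) = Real.log |Real.log x| := (Real.log_abs _).symm
    _ ≤ |Real.log x| := Real.log_le_self (abs_nonneg _)
    _ ≤ |Real.log m| := by
      rw [abs_of_nonpos hlogx, abs_of_nonpos hlogm]
      exact neg_le_neg (Real.log_le_log hm hmx)

/-- Otherwise `M ≤ 1` on `[0, 1)`, and `log log M` stays below `|log M r₁|` once `M r₁ > 0`. -/
theorem eventually_one_lt_of_frequently_lt_log_log {M A : ℝ → ℝ}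
    (hM : MonotoneOn M (Ico 0 1)) (hM0 : ∀ r, 0 ≤ M r) (hA : Monotone A)
    (h : ∀ C, ∃ᶠ r in 𝓝[<] (1 : ℝ), C < A (Real.log (Real.log (M r)))) :
    ∀ᶠ r in 𝓝[<] (1 : ℝ), 1 < M r := by
  by_contra hne
  have hle : ∀ r ∈ Ico (0 : ℝ) 1, M r ≤ 1 := fun r hr => by
    obtain ⟨r', hr'M, hr'⟩ := ((not_eventually.1 hne).and_eventually (Ioo_mem_nhdsLT hr.2)).exists
    exact (hM hr ⟨hr.1.trans hr'.1.le, hr'.2⟩ hr'.1.le).trans (not_lt.1 hr'M)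
  obtain ⟨r₁, hA₁, hr₁⟩ := ((h (A 0)).and_eventually (Ioo_mem_nhdsLT one_pos)).exists
  have hM₁ : 0 < M r₁ := (hM0 r₁).lt_of_ne fun h0 => by
    simp [← h0] at hA₁
  obtain ⟨r, hAr, hr⟩ :=
    ((h (A |Real.log (M r₁)|)).and_eventually (Ioo_mem_nhdsLT hr₁.2)).exists
  refine hAr.not_ge (hA (Real.log_log_le_abs_log hM₁ ?_ (hle r ⟨?_, hr.2⟩)))
  · exact hM ⟨hr₁.1.le, hr₁.2⟩ ⟨hr₁.1.le.trans hr.1.le, hr.2⟩ hr.1.le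
  · exact hr₁.1.le.trans hr.1.le

theorem frequently_mul_lt_of_lt_limsup {ι : Type*} {l : Filter ι} {A B : ι → ℝ} {ρ μ : ℝ}
    (h : limsup (fun r => ((A r / B r : ℝ) : EReal)) l = ρ) (hμ : μ < ρ)
    (hB : ∀ᶠ r in l, 0 < B r) : ∃ᶠ r in l, μ * B r < A r :=
  ((frequently_lt_of_lt_limsup (h := h ▸ EReal.coe_lt_coe hμ)).and_eventually hB).mono
    fun _ hr => (lt_div_iff₀ hr.2).1 (EReal.coe_lt_coe_iff.1 hr.1)

theorem frequently_lt_of_frequently_mul_lt {ι : Type*} {l : Filter ι} {A B : ι → ℝ} {μ : ℝ}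
    (hμ : 0 < μ) (hB : Tendsto B l atTop) (h : ∃ᶠ r in l, μ * B r < A r) (C : ℝ) :
    ∃ᶠ r in l, C < A r :=
  (h.and_eventually (hB.eventually_ge_atTop (C / μ))).mono fun r hr => calc
    C = μ * (C / μ) := by field_simp
    _ ≤ μ * B r := by gcongr; exact hr.2
    _ < A r := hr.1

theorem tendsto_one_div_one_sub_nhdsLT :
    Tendsto (fun r : ℝ => 1 / (1 - r)) (𝓝[<] 1) atTop := by
  have h : Tendsto (fun r : ℝ => 1 - r) (𝓝[<] 1) (𝓝[>] 0) := by
    refine tendsto_nhdsWithin_of_tendsto_nhds_of_eventually_within _ ?_ ?_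
    · exact tendsto_nhdsWithin_of_tendsto_nhds
        (by simpa using (tendsto_id (x := 𝓝 (1 : ℝ))).const_sub 1)
    · filter_upwards [self_mem_nhdsWithin] with r hr
      exact sub_pos.2 (mem_Iio.1 hr)
  simpa [one_div, Function.comp_def] using tendsto_inv_nhdsGT_zero.comp h

theorem InfiniteLogMeasure.mono {s t : Set ℝ} (hst : s ⊆ t) (hs : InfiniteLogMeasure s) :
    InfiniteLogMeasure t :=
  top_unique (hs.symm.le.trans (lintegral_mono_set hst))

theorem half_le_lintegral_Ico_half {s : ℝ} (hs : s < 1) :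
    ENNReal.ofReal (1 / 2) ≤ ∫⁻ r in Ico s ((1 + s) / 2), ENNReal.ofReal (1 / (1 - r)) := by
  have hvol : ENNReal.ofReal (1 / 2) =
      ∫⁻ _ in Ico s ((1 + s) / 2), ENNReal.ofReal (1 / (1 - s)) := by
    have hpos : 0 < 1 - s := sub_pos.2 hs
    rw [setLIntegral_const, Real.volume_Ico, ← ENNReal.ofReal_mul (by positivity)]
    congr 1
    field_simp
    ring
  rw [hvol]
  refine setLIntegral_mono (by fun_prop) fun r hr => ENNReal.ofReal_le_ofReal ?_
  exact one_div_le_one_div_of_le (by linarith [hr.2]) (by linarith [hr.1])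

theorem infiniteLogMeasure_iUnion_Ico_half {s : ℕ → ℝ} (hs : ∀ n, s n < 1)
    (hgap : ∀ n, (1 + s n) / 2 ≤ s (n + 1)) :
    InfiniteLogMeasure (⋃ n, Ico (s n) ((1 + s n) / 2)) := by
  have hmono : Monotone s := monotone_nat_of_le_succ fun n => by linarith [hs n, hgap n]
  have hdisj : Pairwise (Function.onFun Disjoint fun n => Ico (s n) ((1 + s n) / 2)) :=
    (hmono.pairwise_disjoint_on_Ico_succ).mono fun m n h =>
      h.mono (Ico_subset_Ico_right (hgap m)) (Ico_subset_Ico_right (hgap n))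
  rw [InfiniteLogMeasure, lintegral_iUnion (fun _ => measurableSet_Ico) hdisj]
  refine top_unique ?_
  calc (⊤ : ENNReal) = ∑' _ : ℕ, ENNReal.ofReal (1 / 2) :=
        (ENNReal.tsum_const_eq_top_of_ne_zero (by norm_num)).symm
    _ ≤ _ := ENNReal.tsum_le_tsum fun n => half_le_lintegral_Ico_half (hs n)

theorem exists_seq_gap_of_frequently {P : ℝ → Prop} (h : ∃ᶠ r in 𝓝[<] (1 : ℝ), P r) :
    ∃ s : ℕ → ℝ, (∀ n, P (s n) ∧ s n < 1) ∧ ∀ n, (1 + s n) / 2 ≤ s (n + 1) := by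
  have hpick : ∀ t < 1, ∃ r, (P r ∧ r < 1) ∧ t < r := fun t ht =>
    (h.and_eventually (Ioo_mem_nhdsLT ht)).exists.imp fun _ hr => ⟨⟨hr.1, hr.2.2⟩, hr.2.1⟩
  choose! F hFP hFt using hpick
  let s : ℕ → ℝ := fun n => Nat.rec (F 0) (fun _ x => F ((1 + x) / 2)) n
  have hs : ∀ n, P (s n) ∧ s n < 1 := by
    intro n
    induction n with
    | zero => exact hFP 0 one_pos
    | succ n ih => exact hFP _ (by linarith [ih.2])
  exact ⟨s, hs, fun n => (hFt _ (by linarith [(hs n).2])).le⟩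

def halfIntervals (S : Set ℝ) : Set ℝ := ⋃ r ∈ S, Ico r ((1 + r) / 2)

theorem halfIntervals_subset_Ico {S : Set ℝ} (hS : S ⊆ Ico 0 1) :
    halfIntervals S ⊆ Ico 0 1 := by
  simp only [halfIntervals, iUnion_subset_iff]
  intro r hr x hx
  exact ⟨(hS hr).1.trans hx.1, by linarith [(hS hr).2, hx.2]⟩

theorem infiniteLogMeasure_halfIntervals {S : Set ℝ} (hS : ∃ᶠ r in 𝓝[<] (1 : ℝ), r ∈ S) :
    InfiniteLogMeasure (halfIntervals S) := by
  obtain ⟨s, hs, hgap⟩ := exists_seq_gap_of_frequently hS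
  refine (infiniteLogMeasure_iUnion_Ico_half (fun n => (hs n).2) hgap).mono ?_
  exact iUnion_subset fun n => subset_biUnion_of_mem (u := fun r => Ico r ((1 + r) / 2)) (hs n).1

theorem ClassL.monotone {a : ℝ → ℝ} (ha : ClassL a) : Monotone a := ha.2.2.1

theorem ClassL.tendsto_atTop {a : ℝ → ℝ} (ha : ClassL a) : Tendsto a atTop atTop := ha.2.2.2.2

theorem ClassL2.eventually_le_mul {b : ℝ → ℝ} (hb : ClassL2 b) (C : ℝ) {K : ℝ} (hK : 1 < K) :
    ∀ᶠ y in atTop, b (y + C) ≤ K * b y := by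
  filter_upwards [(hb.2 C).eventually_lt_const hK, hb.1.tendsto_atTop.eventually_gt_atTop 0]
    with y hratio hpos
  exact ((div_lt_iff₀ hpos).1 hratio).le

theorem ClassL3.eventually_log_le {g : ℝ → ℝ} (hg : ClassL3 g) :
    ∀ᶠ x in atTop, ∀ y ∈ Icc x (2 * x), Real.log (g y) ≤ Real.log (g x) + Real.log 2 := by
  obtain ⟨R₀, hsub⟩ := hg.2
  filter_upwards [eventually_ge_atTop R₀, hg.1.tendsto_atTop.eventually_gt_atTop 0]
    with x hx hgx y hy
  have hgy : g y ≤ 2 * g x := calc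
    g y ≤ g (x + x) := hg.1.monotone (by linarith [hy.2])
    _ ≤ g x + g x := hsub x hx x hx
    _ = 2 * g x := by ring
  calc Real.log (g y) ≤ Real.log (2 * g x) :=
        Real.log_le_log (hgx.trans_le (hg.1.monotone hy.1)) hgy
    _ = Real.log (g x) + Real.log 2 := by rw [Real.log_mul two_ne_zero hgx.ne', add_comm]

theorem tendsto_betaDen {b g : ℝ → ℝ} (hb : ClassL b) (hg : ClassL g) :
    Tendsto (betaDen b g) (𝓝[<] 1) atTop :=
  hb.tendsto_atTop.comp ((Real.tendsto_log_atTop.comp hg.tendsto_atTop).comp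
    tendsto_one_div_one_sub_nhdsLT)

/-- Since `1/(1 - r') ≤ 2/(1 - r)` on `[r, (1 + r)/2)`, subadditivity of `g` moves
`log g` by at most `log 2`, which `β ∈ L₂` absorbs into the factor `K`. -/
theorem eventually_betaDen_le {b g : ℝ → ℝ} (hb : ClassL2 b) (hg : ClassL3 g) {K : ℝ}
    (hK : 1 < K) :
    ∀ᶠ r in 𝓝[<] (1 : ℝ), ∀ r' ∈ Ico r ((1 + r) / 2), betaDen b g r' ≤ K * betaDen b g r := by
  have hx := tendsto_one_div_one_sub_nhdsLT
  have hlog := Real.tendsto_log_atTop.comp hg.1.tendsto_atTop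
  filter_upwards [hx.eventually hg.eventually_log_le,
    hx.eventually (hlog.eventually (hb.eventually_le_mul (Real.log 2) hK)),
    self_mem_nhdsWithin] with r hlog_le hb_le hr r' hr'
  have hr1 : 0 < 1 - r := sub_pos.2 hr
  have hmem : 1 / (1 - r') ∈ Icc (1 / (1 - r)) (2 * (1 / (1 - r))) := by
    refine ⟨one_div_le_one_div_of_le (by linarith [hr'.2]) (by linarith [hr'.1]), ?_⟩
    calc 1 / (1 - r') ≤ 1 / ((1 - r) / 2) := one_div_le_one_div_of_le (by positivity)
          (by linarith [hr'.2])
      _ = 2 * (1 / (1 - r)) := by field_simp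
  exact (hb.1.monotone (hlog_le _ hmem)).trans hb_le

theorem maxMod_nonneg (f : ℂ → ℂ) (r : ℝ) : 0 ≤ maxMod f r :=
  Real.sSup_nonneg (by rintro _ ⟨z, -, rfl⟩; exact norm_nonneg _)

theorem maxMod_monotoneOn {f : ℂ → ℂ} (hf : DifferentiableOn ℂ f (Metric.ball 0 1)) :
    MonotoneOn (maxMod f) (Ico 0 1) := by
  intro r₁ hr₁ r₂ hr₂ h12
  rcases (hr₁.1.trans h12).eq_or_lt with h0 | hpos
  · rw [le_antisymm h12 (h0 ▸ hr₁.1)]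
  have hball : Metric.closedBall (0 : ℂ) r₂ ⊆ Metric.ball 0 1 :=
    Metric.closedBall_subset_ball hr₂.2
  have hbdd : BddAbove ((fun z => ‖f z‖) '' Metric.sphere (0 : ℂ) r₂) :=
    ((isCompact_sphere 0 r₂).image_of_continuousOn
      (hf.continuousOn.mono (Metric.sphere_subset_closedBall.trans hball)).norm).bddAbove
  have hd : DiffContOnCl ℂ f (Metric.ball (0 : ℂ) r₂) := by
    refine ⟨hf.mono (Metric.ball_subset_ball hr₂.2.le), hf.continuousOn.mono ?_⟩
    rwa [closure_ball 0 hpos.ne']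
  refine Real.sSup_le ?_ (maxMod_nonneg f r₂)
  rintro _ ⟨z, hz, rfl⟩
  refine Complex.norm_le_of_forall_mem_frontier_norm_le Metric.isBounded_ball hd
    (fun w hw => le_csSup hbdd ⟨w, ?_, rfl⟩) ?_
  · rwa [frontier_ball 0 hpos.ne'] at hw
  · rw [closure_ball 0 hpos.ne', mem_closedBall_zero_iff]
    exact (mem_sphere_zero_iff_norm.1 hz).trans_le h12

theorem stmt7_general
    (a b g : ℝ → ℝ) (hscale : GrowthScale a b g)
    (f : ℂ → ℂ) (hf : AnalyticOnNhd ℂ f (Metric.ball (0:ℂ) 1))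
    (rho0 : ℝ) (hrho0 : orderM a b g f = (rho0 : EReal))
    (μ : ℝ) (hμ0 : 0 < μ) (hμ : μ < rho0) :
    ∃ I : Set ℝ, I ⊆ Set.Ico (0:ℝ) 1 ∧ InfiniteLogMeasure I ∧
      ∀ r ∈ I, μ * betaDen b g r < a (Real.log (Real.log (maxMod f r))) := by
  obtain ⟨⟨ha, -⟩, hb, hg, -⟩ := hscale
  obtain ⟨μ', hμμ', hμ'ρ⟩ := exists_between hμ
  have hβ := tendsto_betaDen hb.1 hg.1
  have hfreq : ∃ᶠ r in 𝓝[<] (1 : ℝ), μ' * betaDen b g r < a (Real.log (Real.log (maxMod f r))) :=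
    frequently_mul_lt_of_lt_limsup hrho0 hμ'ρ (hβ.eventually_gt_atTop 0)
  have hM : ∀ᶠ r in 𝓝[<] (1 : ℝ), 1 < maxMod f r :=
    eventually_one_lt_of_frequently_lt_log_log (maxMod_monotoneOn hf.differentiableOn)
      (maxMod_nonneg f) ha.monotone (frequently_lt_of_frequently_mul_lt (by linarith) hβ hfreq)
  have hK := eventually_betaDen_le hb hg (K := μ' / μ) ((one_lt_div hμ0).2 hμμ')
  let S := {r | r ∈ Ico (0 : ℝ) 1 ∧ 1 < maxMod f r ∧
    (∀ r' ∈ Ico r ((1 + r) / 2), betaDen b g r' ≤ μ' / μ * betaDen b g r) ∧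
    μ' * betaDen b g r < a (Real.log (Real.log (maxMod f r)))}
  refine ⟨halfIntervals S, halfIntervals_subset_Ico fun r hr => hr.1,
    infiniteLogMeasure_halfIntervals ?_, ?_⟩
  · have hIco : ∀ᶠ r in 𝓝[<] (1 : ℝ), r ∈ Ico (0 : ℝ) 1 := Ico_mem_nhdsLT one_pos
    exact (hfreq.and_eventually (hIco.and (hM.and hK))).mono
      fun r ⟨hgood, hr, hMr, hKr⟩ => ⟨hr, hMr, hKr, hgood⟩
  · simp only [halfIntervals, mem_iUnion]
    rintro r' ⟨r, ⟨hr, hMr, hKr, hgood⟩, hr'⟩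
    have hr'1 : r' ∈ Ico (0 : ℝ) 1 := ⟨hr.1.trans hr'.1, by linarith [hr.2, hr'.2]⟩
    calc μ * betaDen b g r' ≤ μ * (μ' / μ * betaDen b g r) := by gcongr; exact hKr r' hr'
      _ = μ' * betaDen b g r := by field_simp
      _ < a (Real.log (Real.log (maxMod f r))) := hgood
      _ ≤ a (Real.log (Real.log (maxMod f r'))) := by
        refine ha.monotone (Real.log_le_log (Real.log_pos hMr) (Real.log_le_log (by linarith) ?_))
        exact maxMod_monotoneOn hf.differentiableOn hr hr'1 hr'.1

theorem stmt7
    (a b g : ℝ → ℝ) (hscale : GrowthScale a b g)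
    (f : ℂ → ℂ) (hf : AnalyticOnNhd ℂ f (Metric.ball (0:ℂ) 1))
    (rho0 : ℝ) (hrho0 : orderM a b g f = (rho0 : EReal)) (hrho0pos : 0 < rho0)
    (μ : ℝ) (hμ0 : 0 < μ) (hμ : μ < rho0) :
    ∃ I : Set ℝ, I ⊆ Set.Ico (0:ℝ) 1 ∧ InfiniteLogMeasure I ∧
      ∀ r ∈ I, μ * betaDen b g r < a (Real.log (Real.log (maxMod f r))) :=
  stmt7_general a b g hscale f hf rho0 hrho0 μ hμ0 hμ
end

section
/- Let g:[0,1)→ℝ and h:[0,1)→ℝ be monotone non-decreasing functions such that g(r) ≤ h(r) holds for all r outside an exceptional set F₃ ⊂ (0,1) of finite logarithmic measure. Then there exists d ∈ (0,1) such that, with s(r) = 1 − d(1−r), one has g(r) ≤ h(s(r)) for all r ∈ [0,1). -/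
open Filter Topology MeasureTheory Asymptotics

open Set

theorem integral_inv_one_sub {r s : ℝ} (hrs : r ≤ s) (hs : s < 1) :
    ∫ t in r..s, (1 - t)⁻¹ = Real.log ((1 - r) / (1 - s)) := by
  rw [intervalIntegral.integral_comp_sub_left (fun x : ℝ => x⁻¹), integral_inv]
  rw [uIcc_of_le (by linarith)]
  exact fun h => by linarith [h.1]

theorem lintegral_Ioc_ofReal_one_div_one_sub {r s : ℝ} (hrs : r ≤ s) (hs : s < 1) :
    ∫⁻ t in Ioc r s, ENNReal.ofReal (1 / (1 - t)) =
      ENNReal.ofReal (Real.log ((1 - r) / (1 - s))) := by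
  have hcont : ContinuousOn (fun t : ℝ => (1 - t)⁻¹) (Icc r s) :=
    ContinuousOn.inv₀ (by fun_prop) fun t ht => by linarith [ht.2]
  rw [← integral_inv_one_sub hrs hs, intervalIntegral.integral_of_le hrs,
    ofReal_integral_eq_lintegral_ofReal
      (hcont.integrableOn_Icc.mono_set Ioc_subset_Icc_self)]
  · simp only [one_div]
  · filter_upwards [ae_restrict_mem measurableSet_Ioc] with t ht
    exact inv_nonneg.mpr (by linarith [ht.2])

/-- The intervals `(r, 1 - d (1 - r)]` all have logarithmic measure `log (1 / d)`, so once this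
exceeds the logarithmic measure of `F` none of them fits inside `F`. -/
theorem FiniteLogMeasure.exists_forall_exists_mem_Ioc_not_mem {F : Set ℝ}
    (hF : FiniteLogMeasure F) :
    ∃ d ∈ Ioo (0:ℝ) 1, ∀ r < 1, ∃ r' ∈ Ioc r (1 - d * (1 - r)), r' ∉ F := by
  set I := ∫⁻ t in F, ENNReal.ofReal (1 / (1 - t))
  set L := I.toReal + 1
  have hL : 0 < L := by positivity
  refine ⟨Real.exp (-L), ⟨Real.exp_pos _, Real.exp_lt_one_iff.mpr (by linarith)⟩, ?_⟩
  intro r hr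
  set s := 1 - Real.exp (-L) * (1 - r)
  have h1r : 0 < 1 - r := by linarith
  have hrs : r ≤ s := by nlinarith [Real.exp_lt_one_iff.mpr (neg_lt_zero.mpr hL)]
  have hs : s < 1 := by have := Real.exp_pos (-L); nlinarith
  have hlog : Real.log ((1 - r) / (1 - s)) = L := by
    rw [show 1 - s = Real.exp (-L) * (1 - r) by ring, div_mul_cancel_right₀ h1r.ne',
      Real.log_inv, Real.log_exp, neg_neg]
  by_contra! hsub
  have hle : ENNReal.ofReal L ≤ I := by
    rw [← hlog, ← lintegral_Ioc_ofReal_one_div_one_sub hrs hs]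
    exact lintegral_mono_set hsub
  have hlt : I < ENNReal.ofReal L := by
    have hI : I ≠ ⊤ := hF.ne
    rw [← ENNReal.ofReal_toReal hI]
    exact (ENNReal.ofReal_lt_ofReal_iff hL).mpr (lt_add_one _)
  exact hle.not_gt hlt

theorem stmt13_general
    (g h : ℝ → ℝ)
    (hg : MonotoneOn g (Set.Ico (0:ℝ) 1)) (hh : MonotoneOn h (Set.Ico (0:ℝ) 1))
    (F : Set ℝ) (hFm : FiniteLogMeasure F)
    (hgh : ∀ r ∈ Set.Ico (0:ℝ) 1, r ∉ F → g r ≤ h r) :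
    ∃ d ∈ Set.Ioo (0:ℝ) 1, ∀ r ∈ Set.Ico (0:ℝ) 1, g r ≤ h (1 - d * (1 - r)) := by
  obtain ⟨d, hd, hgap⟩ := hFm.exists_forall_exists_mem_Ioc_not_mem
  refine ⟨d, hd, fun r hr => ?_⟩
  obtain ⟨r', ⟨hrr', hr's⟩, hr'F⟩ := hgap r hr.2
  have hs1 : 1 - d * (1 - r) < 1 := by nlinarith [hd.1, hr.2]
  have hr' : r' ∈ Ico (0:ℝ) 1 := ⟨hr.1.trans hrr'.le, hr's.trans_lt hs1⟩
  calc g r ≤ g r' := hg hr hr' hrr'.le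
    _ ≤ h r' := hgh r' hr' hr'F
    _ ≤ h (1 - d * (1 - r)) := hh hr' ⟨hr'.1.trans hr's, hs1⟩ hr's

theorem stmt13
    (g h : ℝ → ℝ)
    (hg : MonotoneOn g (Set.Ico (0:ℝ) 1)) (hh : MonotoneOn h (Set.Ico (0:ℝ) 1))
    (F : Set ℝ) (hF : F ⊆ Set.Ioo (0:ℝ) 1) (hFm : FiniteLogMeasure F)
    (hgh : ∀ r ∈ Set.Ico (0:ℝ) 1, r ∉ F → g r ≤ h r) :
    ∃ d ∈ Set.Ioo (0:ℝ) 1, ∀ r ∈ Set.Ico (0:ℝ) 1, g r ≤ h (1 - d * (1 - r)) :=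
  stmt13_general g h hg hh F hFm hgh
end
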